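/- arXiv:1812.06483 — 7 statements merged into one kernel-verified Lean document; each statement's English description precedes it below -/
import Mathlib

section
/- Let 𝒜 be a unital C*-algebra and (V, V⁺, e) an AOU 𝒜-space. Then the family (C_n^{min}(V;𝒜))_{n∈ℕ} is an operator 𝒜-system structure on V; that is: each C_n^{min}(V;𝒜) is a cone contained in M_n(V)_h with C_n^{min}(V;𝒜) ∩ (−C_n^{min}(V;𝒜)) = {0}, C_1^{min}(V;𝒜) = V⁺, the family is 𝒜-compatible (A*·X·A ∈ C_n^{min}(V;𝒜) whenever X ∈ C_m^{min}(V;𝒜) and A ∈ M_{m,n}(𝒜)), and for every n the element e_n is an Archimedean order unit for C_n^{min}(V;𝒜). -/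
open Matrix

noncomputable section

/-- An AOU `𝒜`-space: an Archimedean order unit *-vector space `(V, pos, e)` which is an
`A`-bimodule (actions `l`, `r`) satisfying `(a·x)* = x*·a*`, `a·e = e·a` and
`a*·x·a ∈ V⁺` for `x ∈ V⁺`. -/
structure AOUPack (A V : Type*) [Ring A] [StarRing A] [Algebra ℂ A]
    [AddCommGroup V] [Module ℂ V] [StarAddMonoid V] [StarModule ℂ V] where
  /-- the left action `a · x` -/
  l : A → V → V
  /-- the right action `x · a` -/
  r : V → A → V
  /-- the cone `V⁺` of positive elements -/
  pos : Set V
  /-- the Archimedean order unit -/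
  e : V
  l_add : ∀ a b x, l (a + b) x = l a x + l b x
  add_l : ∀ a x y, l a (x + y) = l a x + l a y
  smul_l : ∀ (c : ℂ) a x, l (c • a) x = c • l a x
  l_smul : ∀ (c : ℂ) a x, l a (c • x) = c • l a x
  r_add : ∀ x y a, r (x + y) a = r x a + r y a
  add_r : ∀ x a b, r x (a + b) = r x a + r x b
  smul_r : ∀ (c : ℂ) x a, r (c • x) a = c • r x a
  r_smul : ∀ (c : ℂ) x a, r x (c • a) = c • r x a
  mul_l : ∀ a b x, l (a * b) x = l a (l b x)
  mul_r : ∀ x a b, r x (a * b) = r (r x a) b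
  l_r_assoc : ∀ a x b, r (l a x) b = l a (r x b)
  one_l : ∀ x, l 1 x = x
  star_l : ∀ a x, star (l a x) = r (star x) (star a)
  pos_isSelfAdjoint : ∀ x ∈ pos, star x = x
  pos_add_mem : ∀ x ∈ pos, ∀ y ∈ pos, x + y ∈ pos
  pos_smul_mem : ∀ (t : ℝ), 0 ≤ t → ∀ x ∈ pos, (t : ℂ) • x ∈ pos
  pos_nonempty : pos.Nonempty
  pos_salient : ∀ x ∈ pos, -x ∈ pos → x = 0
  e_isSelfAdjoint : star e = e
  e_orderUnit : ∀ x, star x = x → ∃ t : ℝ, 0 < t ∧ (t : ℂ) • e - x ∈ pos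
  e_arch : ∀ x, (∀ t : ℝ, 0 < t → x + (t : ℂ) • e ∈ pos) → x ∈ pos
  e_comm : ∀ a, l a e = r e a
  conj_mem : ∀ a, ∀ x ∈ pos, r (l (star a) x) a ∈ pos

namespace AOUPack

variable {A V : Type*} [Ring A] [StarRing A] [Algebra ℂ A]
  [AddCommGroup V] [Module ℂ V] [StarAddMonoid V] [StarModule ℂ V]

variable (P : AOUPack A V)

/-- The action of a matrix over `A` on a matrix over `V` from the left:
`(M · X)_{ij} = Σ_p M_{ip} · X_{pj}`. -/
def amul {k m n : ℕ} (M : Matrix (Fin k) (Fin m) A) (X : Matrix (Fin m) (Fin n) V) :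
    Matrix (Fin k) (Fin n) V :=
  Matrix.of fun i j => ∑ p, P.l (M i p) (X p j)

/-- The action of a matrix over `A` on a matrix over `V` from the right:
`(X · N)_{ij} = Σ_p X_{ip} · N_{pj}`. -/
def vmul {m n l : ℕ} (X : Matrix (Fin m) (Fin n) V) (N : Matrix (Fin n) (Fin l) A) :
    Matrix (Fin m) (Fin l) V :=
  Matrix.of fun i j => ∑ p, P.r (X i p) (N p j)

/-- The congruence `M* · X · M` of `X ∈ M_m(V)` by `M ∈ M_{m,n}(A)`. -/
def conj {m n : ℕ} (M : Matrix (Fin m) (Fin n) A) (X : Matrix (Fin m) (Fin m) V) :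
    Matrix (Fin n) (Fin n) V :=
  P.vmul (P.amul Mᴴ X) M

/-- The diagonal matrix `e_n ∈ M_n(V)` with all diagonal entries equal to `e`. -/
def matE (n : ℕ) : Matrix (Fin n) (Fin n) V := Matrix.diagonal fun _ => P.e

/-- `C_n^{min}(V; A)`: hermitian `X ∈ M_n(V)` with `C* · X · C ∈ V⁺` for every
column `C ∈ M_{n,1}(A)`. -/
def Cmin (n : ℕ) : Set (Matrix (Fin n) (Fin n) V) :=
  {X | Xᴴ = X ∧ ∀ C : Matrix (Fin n) (Fin 1) A, P.conj C X 0 0 ∈ P.pos}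

/-- `D_n^{max}(V; A)`: finite sums `Σ_i A_i* · x_i · A_i` with `x_i ∈ V⁺` and
`A_i ∈ M_{1,n}(A)`. -/
def Dmax (n : ℕ) : Set (Matrix (Fin n) (Fin n) V) :=
  {X | ∃ (k : ℕ) (x : Fin k → V) (a : Fin k → Matrix (Fin 1) (Fin n) A),
    (∀ i, x i ∈ P.pos) ∧ X = ∑ i, P.conj (a i) (Matrix.of fun _ _ => x i)}

/-- `C_n^{max}(V; A) = {X : X + r e_n ∈ D_n^{max}(V; A) for all r > 0}`. -/
def Cmax (n : ℕ) : Set (Matrix (Fin n) (Fin n) V) :=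
  {X | ∀ t : ℝ, 0 < t → X + (t : ℂ) • P.matE n ∈ P.Dmax n}

/-- `Q` is an operator `A`-system structure on `V`: an `A`-compatible matrix ordering
with `Q 1 = V⁺` such that `e_n` is an Archimedean order unit for `Q n` for every `n`. -/
structure IsOperatorSystemStructure (Q : ∀ n : ℕ, Set (Matrix (Fin n) (Fin n) V)) : Prop where
  herm : ∀ n, ∀ X ∈ Q n, Xᴴ = X
  add_mem : ∀ n, ∀ X ∈ Q n, ∀ Y ∈ Q n, X + Y ∈ Q n
  smul_mem : ∀ n (t : ℝ), 0 ≤ t → ∀ X ∈ Q n, (t : ℂ) • X ∈ Q n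
  nonempty : ∀ n, (Q n).Nonempty
  salient : ∀ n, ∀ X ∈ Q n, -X ∈ Q n → X = 0
  compat : ∀ m n (X : Matrix (Fin m) (Fin m) V) (M : Matrix (Fin m) (Fin n) A),
    X ∈ Q m → P.conj M X ∈ Q n
  level_one : ∀ X : Matrix (Fin 1) (Fin 1) V, X ∈ Q 1 ↔ X 0 0 ∈ P.pos
  orderUnit : ∀ n (X : Matrix (Fin n) (Fin n) V), Xᴴ = X →
    ∃ t : ℝ, 0 < t ∧ (t : ℂ) • P.matE n - X ∈ Q n
  arch : ∀ n (X : Matrix (Fin n) (Fin n) V),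
    (∀ t : ℝ, 0 < t → X + (t : ℂ) • P.matE n ∈ Q n) → X ∈ Q n

end AOUPack

/-!
Being in `C_n^min` is a condition on the scalar compressions `C* X C`, and `X ↦ C* X C` is
linear with `C* (M* X M) C = (M C)* X (M C)`; this gives the cone axioms, compatibility and the
first level. Salience is polarization: compressing by the columns `e_i`, `e_i + e_j` and
`e_i + i e_j` recovers every entry of `X`. For the order unit, split each entry of a hermitian `X`
as `x = h + i k` with `h, k` hermitian and `±h, ±k ≤ t e`; then
`(a + b)* (t e - h) (a + b) + (a - b)* (t e + h) (a - b) ≥ 0` bounds the contribution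
`a* x b + b* x* a` of `x` and its mirror entry to `C* X C` by a multiple of `a* e a + b* e b`,
and summing over all entries bounds `C* X C` by a multiple of `C* e_n C`.
-/

namespace AOUPack

variable {A V : Type*} [Ring A] [StarRing A] [Algebra ℂ A]
  [AddCommGroup V] [Module ℂ V] [StarAddMonoid V] [StarModule ℂ V]
  (P : AOUPack A V)

lemma r_one (x : V) : P.r x 1 = x := by
  simpa [P.one_l] using (P.star_l 1 (star x)).symm

lemma star_r (x : V) (a : A) : star (P.r x a) = P.l (star a) (star x) := by
  simpa using (congrArg star (P.star_l (star a) (star x))).symm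

lemma r_sum {ι : Type*} (s : Finset ι) (f : ι → V) (a : A) :
    P.r (∑ i ∈ s, f i) a = ∑ i ∈ s, P.r (f i) a :=
  map_sum (AddMonoidHom.mk' (P.r · a) (P.r_add · · a)) f s

lemma zero_mem_pos : (0 : V) ∈ P.pos := by
  obtain ⟨x, hx⟩ := P.pos_nonempty
  simpa using P.pos_smul_mem 0 le_rfl x hx

lemma sum_mem_pos {ι : Type*} (s : Finset ι) {f : ι → V} (hf : ∀ i ∈ s, f i ∈ P.pos) :
    ∑ i ∈ s, f i ∈ P.pos :=
  Finset.sum_induction f (· ∈ P.pos) (fun x y hx hy => P.pos_add_mem x hx y hy)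
    P.zero_mem_pos hf

lemma e_mem_pos : P.e ∈ P.pos := by
  obtain ⟨t, ht, hte⟩ := P.e_orderUnit (-P.e) (by rw [star_neg, P.e_isSelfAdjoint])
  have h := P.pos_smul_mem (t + 1)⁻¹ (by positivity) _ hte
  convert h using 1
  rw [sub_neg_eq_add, smul_add, smul_smul]
  have ht1 : (t : ℂ) + 1 ≠ 0 := by exact_mod_cast (by positivity : t + 1 ≠ 0)
  match_scalars
  field_simp

lemma smul_e_sub_mem_pos_of_le {s t : ℝ} (hst : s ≤ t) {x : V}
    (h : (s : ℂ) • P.e - x ∈ P.pos) : (t : ℂ) • P.e - x ∈ P.pos := by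
  have h' := P.pos_add_mem _ h _ (P.pos_smul_mem (t - s) (sub_nonneg.2 hst) _ P.e_mem_pos)
  convert h' using 1
  push_cast
  module

lemma exists_smul_e_sub_mem_pos_and_add_mem_pos {x : V} (hx : star x = x) :
    ∃ t : ℝ, (t : ℂ) • P.e - x ∈ P.pos ∧ (t : ℂ) • P.e + x ∈ P.pos := by
  obtain ⟨s, -, hs⟩ := P.e_orderUnit x hx
  obtain ⟨t, -, ht⟩ := P.e_orderUnit (-x) (by rw [star_neg, hx])
  refine ⟨max s t, P.smul_e_sub_mem_pos_of_le (le_max_left s t) hs, ?_⟩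
  simpa using P.smul_e_sub_mem_pos_of_le (le_max_right s t) ht

lemma mem_pos_of_forall_add_smul_mem {x y : V} (hy : y ∈ P.pos)
    (h : ∀ t : ℝ, 0 < t → x + (t : ℂ) • y ∈ P.pos) : x ∈ P.pos := by
  obtain ⟨s, hs, hse⟩ := P.e_orderUnit y (P.pos_isSelfAdjoint y hy)
  refine P.e_arch x fun t ht => ?_
  have h' := P.pos_add_mem _ (h (t / s) (by positivity)) _
    (P.pos_smul_mem (t / s) (by positivity) _ hse)
  convert h' using 1
  rw [smul_sub, smul_smul, ← Complex.ofReal_mul, div_mul_cancel₀ t hs.ne']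
  abel

lemma conjTranspose_matE (n : ℕ) : (P.matE n : Matrix (Fin n) (Fin n) V)ᴴ = P.matE n := by
  simp [matE, P.e_isSelfAdjoint]

variable [StarModule ℂ A]

/-- `sandwich a b v = a* · v · b`. -/
def sandwich : A →ₗ⋆[ℂ] A →ₗ[ℂ] V →ₗ[ℂ] V :=
  LinearMap.mk₂'ₛₗ (starRingEnd ℂ) (RingHom.id ℂ)
    (fun a b =>
      { toFun := fun v => P.r (P.l (star a) v) b
        map_add' := fun v w => by rw [P.add_l, P.r_add]
        map_smul' := fun c v => by rw [P.l_smul, P.smul_r]; rfl })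
    (fun a a' b => LinearMap.ext fun v => by simp [P.l_add, P.r_add])
    (fun c a b => LinearMap.ext fun v => by simp [P.smul_l, P.smul_r])
    (fun a b b' => LinearMap.ext fun v => by simp [P.add_r])
    (fun c a b => LinearMap.ext fun v => by simp [P.r_smul])

lemma sandwich_apply (a b : A) (v : V) : P.sandwich a b v = P.r (P.l (star a) v) b := rfl

lemma sandwich_one_one (v : V) : P.sandwich 1 1 v = v := by
  rw [sandwich_apply, star_one, P.one_l, P.r_one]

lemma star_sandwich (a b : A) (v : V) : star (P.sandwich a b v) = P.sandwich b a (star v) := by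
  rw [sandwich_apply, sandwich_apply, P.star_r, P.star_l, star_star, P.l_r_assoc]

lemma sandwich_sandwich (a b c d : A) (v : V) :
    P.sandwich a b (P.sandwich c d v) = P.sandwich (c * a) (d * b) v := by
  simp only [sandwich_apply, star_mul, P.mul_l, P.mul_r, P.l_r_assoc]

lemma sandwich_self_mem_pos (a : A) {v : V} (hv : v ∈ P.pos) : P.sandwich a a v ∈ P.pos :=
  P.conj_mem a v hv

lemma conj_apply {m n : ℕ} (M : Matrix (Fin m) (Fin n) A) (X : Matrix (Fin m) (Fin m) V)
    (i j : Fin n) : P.conj M X i j = ∑ p, ∑ q, P.sandwich (M p i) (M q j) (X p q) := by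
  simp only [conj, vmul, amul, Matrix.of_apply, Matrix.conjTranspose_apply, P.r_sum,
    sandwich_apply]
  exact Finset.sum_comm

lemma conj_add {m n : ℕ} (M : Matrix (Fin m) (Fin n) A) (X Y : Matrix (Fin m) (Fin m) V) :
    P.conj M (X + Y) = P.conj M X + P.conj M Y := by
  ext i j
  simp only [conj_apply, Matrix.add_apply, map_add, Finset.sum_add_distrib]

lemma conj_smul {m n : ℕ} (c : ℂ) (M : Matrix (Fin m) (Fin n) A)
    (X : Matrix (Fin m) (Fin m) V) : P.conj M (c • X) = c • P.conj M X := by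
  ext i j
  simp only [conj_apply, Matrix.smul_apply, map_smul, Finset.smul_sum]

def conjLinearMap {m n : ℕ} (M : Matrix (Fin m) (Fin n) A) :
    Matrix (Fin m) (Fin m) V →ₗ[ℂ] Matrix (Fin n) (Fin n) V where
  toFun := P.conj M
  map_add' := P.conj_add M
  map_smul' c := P.conj_smul c M

lemma conj_neg {m n : ℕ} (M : Matrix (Fin m) (Fin n) A) (X : Matrix (Fin m) (Fin m) V) :
    P.conj M (-X) = -P.conj M X :=
  map_neg (P.conjLinearMap M) X

lemma conj_sub {m n : ℕ} (M : Matrix (Fin m) (Fin n) A) (X Y : Matrix (Fin m) (Fin m) V) :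
    P.conj M (X - Y) = P.conj M X - P.conj M Y :=
  map_sub (P.conjLinearMap M) X Y

lemma conj_zero {m n : ℕ} (M : Matrix (Fin m) (Fin n) A) :
    P.conj M (0 : Matrix (Fin m) (Fin m) V) = 0 :=
  map_zero (P.conjLinearMap M)

lemma conjTranspose_conj {m n : ℕ} (M : Matrix (Fin m) (Fin n) A)
    (X : Matrix (Fin m) (Fin m) V) : (P.conj M X)ᴴ = P.conj M Xᴴ := by
  ext i j
  simp only [Matrix.conjTranspose_apply, conj_apply, star_sum, star_sandwich]
  exact Finset.sum_comm

lemma conj_conj {m n k : ℕ} (M : Matrix (Fin m) (Fin n) A) (N : Matrix (Fin n) (Fin k) A)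
    (X : Matrix (Fin m) (Fin m) V) : P.conj N (P.conj M X) = P.conj (M * N) X := by
  ext i j
  simp only [conj_apply, Matrix.mul_apply, map_sum, LinearMap.sum_apply, sandwich_sandwich]
  simp only [Finset.sum_comm (γ := Fin n) (α := Fin m)]
  exact Finset.sum_congr rfl fun _ _ => Finset.sum_congr rfl fun _ _ => Finset.sum_comm

lemma conj_matE_apply {m n : ℕ} (M : Matrix (Fin m) (Fin n) A) (i j : Fin n) :
    P.conj M (P.matE m) i j = ∑ p, P.sandwich (M p i) (M p j) P.e := by
  simp [conj_apply, matE, Matrix.diagonal_apply, apply_ite]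

/-- An entry `x` of a hermitian matrix and its mirror entry `x*` contribute `a* x b + b* x* a`
to `C* X C`; `t` bounds this contribution by `t (a* e a + b* e b)`. -/
def IsEntryBound (t : ℝ) (x : V) : Prop :=
  ∀ a b : A, (t : ℂ) • (P.sandwich a a P.e + P.sandwich b b P.e)
    - (P.sandwich a b x + P.sandwich b a (star x)) ∈ P.pos

lemma isEntryBound_of_selfAdjoint {t : ℝ} {x : V} (hx : star x = x)
    (hsub : (t : ℂ) • P.e - x ∈ P.pos) (hadd : (t : ℂ) • P.e + x ∈ P.pos) :
    P.IsEntryBound t x := by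
  intro a b
  -- twice the claimed element is `(a + b)* (t e - x) (a + b) + (a - b)* (t e + x) (a - b)`
  have h := P.pos_smul_mem (1 / 2) (by norm_num) _ (P.pos_add_mem _
    (P.sandwich_self_mem_pos (a + b) hsub) _ (P.sandwich_self_mem_pos (a - b) hadd))
  convert h using 1
  simp only [hx, map_add, map_sub, map_smul, LinearMap.add_apply, LinearMap.sub_apply]
  push_cast
  module

variable {P} in
lemma IsEntryBound.add {s t : ℝ} {x y : V} (hx : P.IsEntryBound s x) (hy : P.IsEntryBound t y) :
    P.IsEntryBound (s + t) (x + y) := by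
  intro a b
  convert P.pos_add_mem _ (hx a b) _ (hy a b) using 1
  simp only [star_add, map_add]
  push_cast
  module

variable {P} in
lemma IsEntryBound.I_smul {t : ℝ} {x : V} (hx : P.IsEntryBound t x) :
    P.IsEntryBound t (Complex.I • x) := by
  intro a b
  convert hx (-Complex.I • a) b using 1
  simp only [star_smul, map_smul, map_smulₛₗ, LinearMap.smul_apply, Complex.star_def,
    map_neg, Complex.conj_I, smul_smul]
  simp only [neg_mul, Complex.I_mul_I, neg_neg, one_smul, neg_smul]

variable {P} in
lemma IsEntryBound.mono {s t : ℝ} {x : V} (hx : P.IsEntryBound s x) (hst : s ≤ t) :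
    P.IsEntryBound t x := by
  intro a b
  have he := P.pos_add_mem _ (P.sandwich_self_mem_pos a P.e_mem_pos) _
    (P.sandwich_self_mem_pos b P.e_mem_pos)
  convert P.pos_add_mem _ (hx a b) _ (P.pos_smul_mem (t - s) (sub_nonneg.2 hst) _ he) using 1
  push_cast
  module

lemma exists_isEntryBound (x : V) : ∃ t : ℝ, P.IsEntryBound t x := by
  set h : V := (1 / 2 : ℂ) • (x + star x)
  set k : V := (-Complex.I / 2) • (x - star x)
  have hh : star h = h := by simp only [h, star_smul, star_add, star_star]; simp [add_comm]
  have hk : star k = k := by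
    simp only [k, star_smul, star_sub, star_star]
    simp only [star_div₀, star_neg, Complex.star_def, Complex.conj_I, map_ofNat]
    module
  obtain ⟨s, hs₁, hs₂⟩ := P.exists_smul_e_sub_mem_pos_and_add_mem_pos hh
  obtain ⟨t, ht₁, ht₂⟩ := P.exists_smul_e_sub_mem_pos_and_add_mem_pos hk
  have hx : x = h + Complex.I • k := by
    have hI : Complex.I * (-Complex.I / 2) = 1 / 2 := by
      ring_nf
      rw [Complex.I_sq]
      ring
    simp only [h, k, smul_smul, hI]
    module
  rw [hx]
  exact ⟨s + t, (P.isEntryBound_of_selfAdjoint hh hs₁ hs₂).add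
    (P.isEntryBound_of_selfAdjoint hk ht₁ ht₂).I_smul⟩

lemma smul_sum_sandwich_e_sub_mem_pos {n : ℕ} {X : Matrix (Fin n) (Fin n) V} (hX : Xᴴ = X)
    {t : ℝ} (ht : ∀ p q, P.IsEntryBound t (X p q)) (c : Fin n → A) :
    ((n * t : ℝ) : ℂ) • ∑ p, P.sandwich (c p) (c p) P.e
      - ∑ p, ∑ q, P.sandwich (c p) (c q) (X p q) ∈ P.pos := by
  have hstar : ∀ p q, star (X p q) = X q p := fun p q => by
    rw [← Matrix.conjTranspose_apply, hX]
  have hsum := P.sum_mem_pos Finset.univ fun p _ =>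
    P.sum_mem_pos Finset.univ fun q _ => ht p q (c p) (c q)
  simp only [hstar, Finset.sum_sub_distrib, Finset.sum_add_distrib, ← Finset.smul_sum,
    Finset.sum_const, Finset.card_univ, Fintype.card_fin] at hsum
  rw [Finset.sum_comm (f := fun p q => P.sandwich (c q) (c p) (X q p))] at hsum
  convert P.pos_smul_mem (1 / 2) (by norm_num) _ hsum using 1
  rw [← Nat.cast_smul_eq_nsmul ℂ]
  push_cast
  module

lemma sum_sandwich_single {n : ℕ} (X : Matrix (Fin n) (Fin n) V) (i j : Fin n) (x y : A) :
    ∑ p, ∑ q, P.sandwich ((Pi.single i x : Fin n → A) p) ((Pi.single j y : Fin n → A) q) (X p q)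
      = P.sandwich x y (X i j) := by
  rw [Fintype.sum_eq_single i fun p hp => by simp [Pi.single_eq_of_ne hp],
    Fintype.sum_eq_single j fun q hq => by simp [Pi.single_eq_of_ne hq]]
  simp

lemma eq_zero_of_forall_sum_sandwich_eq_zero {n : ℕ} {X : Matrix (Fin n) (Fin n) V}
    (h : ∀ c : Fin n → A, ∑ p, ∑ q, P.sandwich (c p) (c q) (X p q) = 0) : X = 0 := by
  have hpair : ∀ i j (x y : A), P.sandwich x x (X i i) + P.sandwich y x (X j i)
      + (P.sandwich x y (X i j) + P.sandwich y y (X j j)) = 0 := by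
    intro i j x y
    have hc := h (Pi.single i x + Pi.single j y)
    simpa only [Pi.add_apply, map_add, LinearMap.add_apply, Finset.sum_add_distrib,
      sum_sandwich_single] using hc
  have hdiag : ∀ i, X i i = 0 := fun i => by
    simpa [sandwich_one_one] using hpair i i 1 0
  ext i j
  rw [Matrix.zero_apply]
  have hsum := hpair i j 1 1
  have hdiff := hpair i j 1 (Complex.I • 1)
  simp only [map_smul, map_smulₛₗ, LinearMap.smul_apply, sandwich_one_one, hdiag, smul_zero,
    zero_add, add_zero, Complex.conj_I] at hsum hdiff
  linear_combination (norm := skip) (1 / 2 : ℂ) • hsum + (-Complex.I / 2) • hdiff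
  match_scalars <;> ring_nf <;> simp only [Complex.I_sq] <;> ring

lemma conj_replicateCol_apply {n : ℕ} (c : Fin n → A) (X : Matrix (Fin n) (Fin n) V) :
    P.conj (Matrix.replicateCol (Fin 1) c) X 0 0 = ∑ p, ∑ q, P.sandwich (c p) (c q) (X p q) :=
  P.conj_apply _ X 0 0

lemma add_mem_Cmin {n : ℕ} {X Y : Matrix (Fin n) (Fin n) V} (hX : X ∈ P.Cmin n)
    (hY : Y ∈ P.Cmin n) : X + Y ∈ P.Cmin n := by
  refine ⟨by rw [Matrix.conjTranspose_add, hX.1, hY.1], fun C => ?_⟩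
  rw [conj_add, Matrix.add_apply]
  exact P.pos_add_mem _ (hX.2 C) _ (hY.2 C)

lemma smul_mem_Cmin {n : ℕ} {t : ℝ} (ht : 0 ≤ t) {X : Matrix (Fin n) (Fin n) V}
    (hX : X ∈ P.Cmin n) : (t : ℂ) • X ∈ P.Cmin n := by
  refine ⟨by simp [hX.1], fun C => ?_⟩
  rw [conj_smul, Matrix.smul_apply]
  exact P.pos_smul_mem t ht _ (hX.2 C)

lemma zero_mem_Cmin (n : ℕ) : (0 : Matrix (Fin n) (Fin n) V) ∈ P.Cmin n :=
  ⟨Matrix.conjTranspose_zero, fun C => by simpa [conj_zero] using P.zero_mem_pos⟩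

lemma eq_zero_of_mem_Cmin_of_neg_mem_Cmin {n : ℕ} {X : Matrix (Fin n) (Fin n) V}
    (hX : X ∈ P.Cmin n) (hnX : -X ∈ P.Cmin n) : X = 0 := by
  refine P.eq_zero_of_forall_sum_sandwich_eq_zero fun c => ?_
  rw [← conj_replicateCol_apply]
  refine P.pos_salient _ (hX.2 _) ?_
  simpa [conj_neg] using hnX.2 (Matrix.replicateCol (Fin 1) c)

lemma conj_mem_Cmin {m n : ℕ} (M : Matrix (Fin m) (Fin n) A) {X : Matrix (Fin m) (Fin m) V}
    (hX : X ∈ P.Cmin m) : P.conj M X ∈ P.Cmin n :=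
  ⟨by rw [conjTranspose_conj, hX.1], fun C => by rw [conj_conj]; exact hX.2 (M * C)⟩

lemma mem_Cmin_one_iff (X : Matrix (Fin 1) (Fin 1) V) : X ∈ P.Cmin 1 ↔ X 0 0 ∈ P.pos := by
  have hconj : ∀ C : Matrix (Fin 1) (Fin 1) A,
      P.conj C X 0 0 = P.sandwich (C 0 0) (C 0 0) (X 0 0) := fun C => by
    simp [conj_apply]
  refine ⟨fun hX => by simpa [hconj, sandwich_one_one] using hX.2 1, fun hX => ⟨?_, fun C => ?_⟩⟩
  · ext i j
    fin_cases i; fin_cases j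
    exact P.pos_isSelfAdjoint _ hX
  · rw [hconj]
    exact P.sandwich_self_mem_pos _ hX

lemma exists_smul_matE_sub_mem_Cmin {n : ℕ} {X : Matrix (Fin n) (Fin n) V} (hX : Xᴴ = X) :
    ∃ t : ℝ, 0 < t ∧ (t : ℂ) • P.matE n - X ∈ P.Cmin n := by
  obtain ⟨t, ht⟩ : ∃ t : ℝ, ∀ p q, P.IsEntryBound t (X p q) := by
    choose s hs using fun pq : Fin n × Fin n => P.exists_isEntryBound (X pq.1 pq.2)
    obtain ⟨t, hst⟩ := Finite.exists_le s
    exact ⟨t, fun p q => (hs (p, q)).mono (hst (p, q))⟩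
  refine ⟨n * max t 0 + 1, by positivity, by simp [conjTranspose_matE, hX], fun C => ?_⟩
  have hE := P.sum_mem_pos Finset.univ fun p _ =>
    P.sandwich_self_mem_pos (C p 0) P.e_mem_pos
  have hbound := P.smul_sum_sandwich_e_sub_mem_pos hX
    (fun p q => (ht p q).mono (le_max_left t 0)) (fun p => C p 0)
  rw [conj_sub, Matrix.sub_apply, conj_smul, Matrix.smul_apply, conj_matE_apply, conj_apply]
  convert P.pos_add_mem _ hbound _ hE using 1
  push_cast
  module

lemma mem_Cmin_of_forall_add_smul_matE_mem {n : ℕ} {X : Matrix (Fin n) (Fin n) V}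
    (h : ∀ t : ℝ, 0 < t → X + (t : ℂ) • P.matE n ∈ P.Cmin n) : X ∈ P.Cmin n := by
  refine ⟨?_, fun C => ?_⟩
  · simpa [conjTranspose_matE] using (h 1 one_pos).1
  · refine P.mem_pos_of_forall_add_smul_mem (y := P.conj C (P.matE n) 0 0) ?_ fun t ht => ?_
    · rw [conj_matE_apply]
      exact P.sum_mem_pos _ fun p _ => P.sandwich_self_mem_pos _ P.e_mem_pos
    · simpa only [conj_add, conj_smul, Matrix.add_apply, Matrix.smul_apply] using (h t ht).2 C

end AOUPack

/-- Theorem 3.2 (first part): `(C_n^{min}(V;𝒜))_{n∈ℕ}` is an operator `𝒜`-system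
structure on `V`. -/
theorem cmin_isOperatorSystemStructure
    {A V : Type*} [CStarAlgebra A]
    [AddCommGroup V] [Module ℂ V] [StarAddMonoid V] [StarModule ℂ V]
    (P : AOUPack A V) :
    P.IsOperatorSystemStructure (fun n => P.Cmin n) := by
  constructor
  · exact fun _ _ hX => hX.1
  · exact fun _ _ hX _ hY => P.add_mem_Cmin hX hY
  · exact fun _ _ ht _ hX => P.smul_mem_Cmin ht hX
  · exact fun n => ⟨0, P.zero_mem_Cmin n⟩
  · exact fun _ _ hX hnX => P.eq_zero_of_mem_Cmin_of_neg_mem_Cmin hX hnX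
  · exact fun _ _ _ M hX => P.conj_mem_Cmin M hX
  · exact P.mem_Cmin_one_iff
  · exact fun _ _ hX => P.exists_smul_matE_sub_mem_Cmin hX
  · exact fun _ _ h => P.mem_Cmin_of_forall_add_smul_matE_mem h
end
end

section
/- Let 𝒜 be a unital C*-algebra and (V, V⁺, e) an AOU 𝒜-space. If (P_n)_{n∈ℕ} is any operator 𝒜-system structure on V, then P_n ⊆ C_n^{min}(V;𝒜) for every n ∈ ℕ. -/
open Matrix

noncomputable section

/-- Theorem 3.2 (second part): any operator `𝒜`-system structure on `V` is contained
in the minimal one. -/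
theorem opSysStructure_subset_cmin
    {A V : Type*} [CStarAlgebra A]
    [AddCommGroup V] [Module ℂ V] [StarAddMonoid V] [StarModule ℂ V]
    (P : AOUPack A V) (Q : ∀ n : ℕ, Set (Matrix (Fin n) (Fin n) V))
    (hQ : P.IsOperatorSystemStructure Q) :
    ∀ n : ℕ, Q n ⊆ P.Cmin n := by
  intro n X hX
  exact ⟨hQ.herm n X hX, fun C => (hQ.level_one _).mp (hQ.compat n 1 X C hX)⟩
end
end

section
/- Let 𝒜 be a unital C*-algebra, (V, V⁺, e) an AOU 𝒜-space, S an operator 𝒜-system, and φ: S → V a positive 𝒜-bimodule map. Then φ is completely positive as a map into the minimal structure: φ^{(n)}(M_n(S)⁺) ⊆ C_n^{min}(V;𝒜) for every n ∈ ℕ. -/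
open Matrix

noncomputable section

/-!
A positive map between AOU spaces is automatically `*`-preserving: every hermitian `x` is the
difference of the positive elements `t e` and `t e - x`, whose images are hermitian. A bimodule
map commutes with the matrix actions, so `C* · φ⁽ⁿ⁾(X) · C = φ(C* · X · C)`, and
`C* · X · C ∈ M₁(S)⁺ = S⁺` by compatibility of the matrix ordering of `S`.
-/

namespace AOUPack

section

variable {A V : Type*} [Ring A] [StarRing A] [Algebra ℂ A]
  [AddCommGroup V] [Module ℂ V] [StarAddMonoid V] [StarModule ℂ V]

theorem e_mem_pos_s2 (P : AOUPack A V) : P.e ∈ P.pos := by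
  obtain ⟨t, ht, hpos⟩ := P.e_orderUnit (-P.e) (by rw [star_neg, P.e_isSelfAdjoint])
  have hscaled := P.pos_smul_mem (t + 1)⁻¹ (by positivity) _ hpos
  have ht1 : ((t + 1 : ℝ) : ℂ) ≠ 0 := by exact_mod_cast (by positivity : t + 1 ≠ 0)
  have hte : (t : ℂ) • P.e - -P.e = ((t + 1 : ℝ) : ℂ) • P.e := by push_cast; module
  rwa [hte, smul_smul, Complex.ofReal_inv, inv_mul_cancel₀ ht1, one_smul] at hscaled

end

section

variable {A B S V : Type*} [Ring A] [StarRing A] [Algebra ℂ A]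
  [Ring B] [StarRing B] [Algebra ℂ B]
  [AddCommGroup S] [Module ℂ S] [StarAddMonoid S] [StarModule ℂ S]
  [AddCommGroup V] [Module ℂ V] [StarAddMonoid V] [StarModule ℂ V]

open ComplexStarModule in
theorem map_star_of_map_pos {PS : AOUPack A S} {P : AOUPack B V} {φ : S →ₗ[ℂ] V}
    (hpos : ∀ x ∈ PS.pos, φ x ∈ P.pos) (x : S) : φ (star x) = star (φ x) := by
  have hherm : ∀ y : S, IsSelfAdjoint y → IsSelfAdjoint (φ y) := by
    intro y hy
    obtain ⟨t, -, hty⟩ := PS.e_orderUnit y hy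
    have hφy : φ y = (t : ℂ) • φ PS.e - φ ((t : ℂ) • PS.e - y) := by
      rw [map_sub, map_smul]; abel
    rw [hφy]
    exact .sub (.smul (Complex.conj_ofReal t) (P.pos_isSelfAdjoint _ (hpos _ PS.e_mem_pos_s2)))
      (P.pos_isSelfAdjoint _ (hpos _ hty))
  rw [← realPart_add_I_smul_imaginaryPart x]
  simp only [star_add, star_smul, map_add, map_smul, (ℜ x).prop.star_eq, (ℑ x).prop.star_eq,
    (hherm _ (ℜ x).prop).star_eq, (hherm _ (ℑ x).prop).star_eq]

end

section

variable {A S V : Type*} [Ring A] [StarRing A] [Algebra ℂ A]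
  [AddCommGroup S] [Module ℂ S] [StarAddMonoid S] [StarModule ℂ S]
  [AddCommGroup V] [Module ℂ V] [StarAddMonoid V] [StarModule ℂ V]
  {PS : AOUPack A S} {P : AOUPack A V} {φ : S →ₗ[ℂ] V}

theorem amul_map (hl : ∀ (a : A) (x : S), φ (PS.l a x) = P.l a (φ x)) {k m n : ℕ}
    (M : Matrix (Fin k) (Fin m) A) (X : Matrix (Fin m) (Fin n) S) :
    P.amul M (X.map φ) = (PS.amul M X).map φ := by
  ext i j
  simp [amul, hl]

theorem vmul_map (hr : ∀ (x : S) (a : A), φ (PS.r x a) = P.r (φ x) a) {m n k : ℕ}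
    (X : Matrix (Fin m) (Fin n) S) (N : Matrix (Fin n) (Fin k) A) :
    P.vmul (X.map φ) N = (PS.vmul X N).map φ := by
  ext i j
  simp [vmul, hr]

theorem conj_map (hl : ∀ (a : A) (x : S), φ (PS.l a x) = P.l a (φ x))
    (hr : ∀ (x : S) (a : A), φ (PS.r x a) = P.r (φ x) a) {m n : ℕ}
    (M : Matrix (Fin m) (Fin n) A) (X : Matrix (Fin m) (Fin m) S) :
    P.conj M (X.map φ) = (PS.conj M X).map φ := by
  rw [conj, conj, amul_map hl, vmul_map hr]

end

end AOUPack

/-- Theorem 3.3 (i): a positive `𝒜`-bimodule map from an operator `𝒜`-system `S`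
into `V` is completely positive into `omin_𝒜(V)`. -/
theorem positive_bimodule_map_into_cmin_completelyPositive
    {A S V : Type*} [CStarAlgebra A]
    [AddCommGroup S] [Module ℂ S] [StarAddMonoid S] [StarModule ℂ S]
    [AddCommGroup V] [Module ℂ V] [StarAddMonoid V] [StarModule ℂ V]
    (PS : AOUPack A S) (QS : ∀ n : ℕ, Set (Matrix (Fin n) (Fin n) S))
    (hQS : PS.IsOperatorSystemStructure QS)
    (P : AOUPack A V)
    (φ : S →ₗ[ℂ] V)
    (hl : ∀ (a : A) (x : S), φ (PS.l a x) = P.l a (φ x))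
    (hr : ∀ (x : S) (a : A), φ (PS.r x a) = P.r (φ x) a)
    (hpos : ∀ x ∈ PS.pos, φ x ∈ P.pos) :
    ∀ n : ℕ, ∀ X ∈ QS n, X.map φ ∈ P.Cmin n := by
  intro n X hX
  refine ⟨?_, fun C => ?_⟩
  · rw [← conjTranspose_map φ (AOUPack.map_star_of_map_pos hpos), hQS.herm n X hX]
  · rw [AOUPack.conj_map hl hr]
    exact hpos _ ((hQS.level_one _).mp (hQS.compat n 1 X C hX))
end
end

section
/- Let 𝒜 be a unital C*-algebra and (V, V⁺, e) an AOU 𝒜-space. If (P_n)_{n∈ℕ} is any operator 𝒜-system structure on V, then C_n^{max}(V;𝒜) ⊆ P_n for every n ∈ ℕ. -/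
open Matrix

noncomputable section

namespace AOUPack.IsOperatorSystemStructure

variable {A V : Type*} [Ring A] [StarRing A] [Algebra ℂ A]
  [AddCommGroup V] [Module ℂ V] [StarAddMonoid V] [StarModule ℂ V]
  {P : AOUPack A V} {Q : ∀ n : ℕ, Set (Matrix (Fin n) (Fin n) V)}

theorem zero_mem (hQ : P.IsOperatorSystemStructure Q) (n : ℕ) : 0 ∈ Q n := by
  obtain ⟨Y, hY⟩ := hQ.nonempty n
  simpa using hQ.smul_mem n 0 le_rfl Y hY

theorem sum_mem (hQ : P.IsOperatorSystemStructure Q) {n k : ℕ}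
    {X : Fin k → Matrix (Fin n) (Fin n) V} (hX : ∀ i, X i ∈ Q n) : ∑ i, X i ∈ Q n :=
  Finset.sum_induction X (· ∈ Q n) (fun _ _ hY hZ => hQ.add_mem n _ hY _ hZ)
    (hQ.zero_mem n) fun i _ => hX i

theorem conj_row_mem (hQ : P.IsOperatorSystemStructure Q) {n : ℕ} {x : V} (hx : x ∈ P.pos)
    (a : Matrix (Fin 1) (Fin n) A) : P.conj a (Matrix.of fun _ _ => x) ∈ Q n :=
  hQ.compat 1 n _ a ((hQ.level_one _).2 hx)

theorem dmax_subset (hQ : P.IsOperatorSystemStructure Q) (n : ℕ) : P.Dmax n ⊆ Q n := by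
  rintro _ ⟨k, x, a, hx, rfl⟩
  exact hQ.sum_mem fun i => hQ.conj_row_mem (hx i) (a i)

end AOUPack.IsOperatorSystemStructure

/-- Theorem 3.8 (second part): the maximal operator `𝒜`-system structure is contained
in any operator `𝒜`-system structure on `V`. -/
theorem cmax_subset_opSysStructure
    {A V : Type*} [CStarAlgebra A]
    [AddCommGroup V] [Module ℂ V] [StarAddMonoid V] [StarModule ℂ V]
    (P : AOUPack A V) (Q : ∀ n : ℕ, Set (Matrix (Fin n) (Fin n) V))
    (hQ : P.IsOperatorSystemStructure Q) :
    ∀ n : ℕ, P.Cmax n ⊆ Q n :=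
  fun n X hX => hQ.arch n X fun t ht => hQ.dmax_subset n (hX t ht)
end
end

section
/- Let k, n be positive integers and let X = (X_{ij})_{i,j=1}^n ∈ M_{nk}(ℂ) be positive semidefinite, with blocks X_{ij} ∈ M_k(ℂ). Then there exist m ∈ ℕ and diagonal matrices D_i^{(r)} ∈ D_k (1 ≤ i ≤ n, 1 ≤ r ≤ m) such that X_{ij} = Σ_{r=1}^m D_i^{(r)} J (D_j^{(r)})* for all i, j, where J ∈ M_k(ℂ) is the matrix all of whose entries equal 1. (This shows every positive block matrix lies in D_n^{max}(M_k; D_k), whence M_k = omax_{D_k}(M_k).) -/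
open Matrix
open scoped ComplexOrder

/-! A positive semidefinite matrix is a sum of rank-one matrices `v v*`, and the `(i, j)` block of
`v v*` is `diag(v_i) J diag(v_j)*`, where `v_i` is the `i`-th length-`k` segment of `v`. -/

theorem Matrix.diagonal_mul_of_one_mul_conjTranspose_diagonal {α R : Type*} [Fintype α]
    [DecidableEq α] [Semiring R] [StarRing R] (d e : α → R) :
    diagonal d * (of fun _ _ : α => (1 : R)) * (diagonal e)ᴴ = vecMulVec d (star e) := by
  ext a b
  simp [diagonal_conjTranspose, vecMulVec_apply]

/-- Proposition 3.10 (half of `M_k = omax_{D_k}(M_k)`): every positive semidefinite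
`nk × nk` matrix `X`, viewed as an `n × n` block matrix with `k × k` blocks, can be
written blockwise as `X_{ij} = Σ_r D_i^{(r)} J (D_j^{(r)})*` with `D_i^{(r)}` diagonal
and `J` the all-ones matrix. -/
theorem posSemidef_block_eq_sum_diag_J_diag
    (k n : ℕ)
    (X : Matrix (Fin n × Fin k) (Fin n × Fin k) ℂ) (hX : X.PosSemidef) :
    ∃ (m : ℕ) (D : Fin m → Fin n → Matrix (Fin k) (Fin k) ℂ),
      (∀ r i, (D r i).IsDiag) ∧
      ∀ i j, (Matrix.of fun a b : Fin k => X (i, a) (j, b)) =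
        ∑ r, D r i * (Matrix.of fun _ _ : Fin k => (1 : ℂ)) * (D r j)ᴴ := by
  obtain ⟨m, v, rfl⟩ := posSemidef_iff_eq_sum_vecMulVec.mp hX
  refine ⟨m, fun r i => diagonal fun a => v r (i, a), fun _ _ => isDiag_diagonal _, fun i j => ?_⟩
  simp_rw [diagonal_mul_of_one_mul_conjTranspose_diagonal]
  ext a b
  simp only [of_apply, Matrix.sum_apply, vecMulVec_apply, Pi.star_apply]
end

section
/- Let 𝒜 be a unital C*-algebra, H a complex Hilbert space, π: 𝒜 → B(H) a unital *-homomorphism, and (ξ_i)_{i∈ℕ} a sequence in H with Σ_{i=1}^∞ ‖ξ_i‖² = 1; define ω: 𝒜 → ℂ by ω(c) = Σ_{i=1}^∞ ⟨π(c)ξ_i, ξ_i⟩. Then for every m ∈ ℕ, every matrix T = (T_{pq})_{p,q=1}^m ∈ M_m(B(H)) with ‖T‖ ≤ 1 in B(H^m), and all a_1, …, a_m, b_1, …, b_m ∈ 𝒜, one has |Σ_{i=1}^∞ ⟨(Σ_{p,q=1}^m π(a_p) T_{pq} π(b_q)) ξ_i, ξ_i⟩| ≤ ω(Σ_{p=1}^m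 a_p a_p*)^{1/2} · ω(Σ_{q=1}^m b_q* b_q)^{1/2}. -/
/-!
Put `u_i = (π(a_p)^* ξ_i)_p` and `v_i = (π(b_q) ξ_i)_q` in `H^m`. Each summand is then
`⟪T v_i, u_i⟫`, of modulus at most `‖v_i‖ ‖u_i‖` since `T` is a contraction, while
`Σ_i ‖u_i‖² = ω(Σ_p a_p a_p^*)` and `Σ_i ‖v_i‖² = ω(Σ_q b_q^* b_q)`. The Cauchy–Schwarz
inequality for series finishes the proof.
-/

open Matrix
open scoped InnerProductSpace

noncomputable section

/-- The bounded operator on the Hilbert space direct sum `H^m = PiLp 2 (fun _ : Fin m => H)`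
induced by an `m × m` matrix of bounded operators on `H`. -/
def matOp {H : Type*} [NormedAddCommGroup H] [InnerProductSpace ℂ H]
    {m : ℕ} (T : Matrix (Fin m) (Fin m) (H →L[ℂ] H)) :
    (PiLp 2 fun _ : Fin m => H) →L[ℂ] (PiLp 2 fun _ : Fin m => H) :=
  ((PiLp.continuousLinearEquiv 2 ℂ fun _ : Fin m => H).symm.toContinuousLinearMap).comp
    ((ContinuousLinearMap.pi fun i =>
        ∑ j, (T i j).comp (ContinuousLinearMap.proj j)).comp
      (PiLp.continuousLinearEquiv 2 ℂ fun _ : Fin m => H).toContinuousLinearMap)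

lemma Real.summable_mul_and_tsum_mul_le_sqrt_mul_sqrt {ι : Type*} {f g : ι → ℝ}
    (hf : ∀ i, 0 ≤ f i) (hg : ∀ i, 0 ≤ g i)
    (hf_sum : Summable fun i => f i ^ 2) (hg_sum : Summable fun i => g i ^ 2) :
    Summable (fun i => f i * g i) ∧
      ∑' i, f i * g i ≤ √(∑' i, f i ^ 2) * √(∑' i, g i ^ 2) := by
  simp only [Real.sqrt_eq_rpow, ← Real.rpow_two] at hf_sum hg_sum ⊢
  exact Real.summable_and_inner_le_Lp_mul_Lq_tsum_of_nonneg .two_two hf hg hf_sum hg_sum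

section Series

variable {ι 𝕜 E F : Type*} [RCLike 𝕜]

lemma summable_norm_apply_sq [SeminormedAddCommGroup E] [SeminormedAddCommGroup F]
    [NormedSpace 𝕜 E] [NormedSpace 𝕜 F] (S : E →L[𝕜] F) {x : ι → E}
    (hx : Summable fun i => ‖x i‖ ^ 2) :
    Summable fun i => ‖S (x i)‖ ^ 2 :=
  (hx.mul_left (‖S‖ ^ 2)).of_nonneg_of_le (fun i => sq_nonneg _) fun i => by
    rw [← mul_pow]; gcongr; exact S.le_opNorm _

lemma summable_norm_toLp_apply_sq {κ : Type*} [Fintype κ] [SeminormedAddCommGroup E]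
    [SeminormedAddCommGroup F] [NormedSpace 𝕜 E] [NormedSpace 𝕜 F] (S : κ → E →L[𝕜] F)
    {x : ι → E} (hx : Summable fun i => ‖x i‖ ^ 2) :
    Summable fun i => ‖WithLp.toLp 2 (fun q => S q (x i))‖ ^ 2 := by
  simp only [PiLp.norm_sq_eq_of_L2]
  exact summable_sum fun q _ => summable_norm_apply_sq (S q) hx

variable [NormedAddCommGroup E] [InnerProductSpace 𝕜 E]
  [NormedAddCommGroup F] [InnerProductSpace 𝕜 F]

lemma norm_tsum_inner_apply_le_of_norm_le_one {S : E →L[𝕜] F} (hS : ‖S‖ ≤ 1) {x : ι → E}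
    {y : ι → F} (hx : Summable fun i => ‖x i‖ ^ 2) (hy : Summable fun i => ‖y i‖ ^ 2) :
    ‖∑' i, ⟪S (x i), y i⟫_𝕜‖ ≤ √(∑' i, ‖x i‖ ^ 2) * √(∑' i, ‖y i‖ ^ 2) := by
  obtain ⟨hxy, hCS⟩ := Real.summable_mul_and_tsum_mul_le_sqrt_mul_sqrt
    (fun i => norm_nonneg (x i)) (fun i => norm_nonneg (y i)) hx hy
  have hbound (i : ι) : ‖⟪S (x i), y i⟫_𝕜‖ ≤ ‖x i‖ * ‖y i‖ :=
    calc ‖⟪S (x i), y i⟫_𝕜‖ ≤ ‖S (x i)‖ * ‖y i‖ := norm_inner_le_norm _ _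
      _ ≤ ‖x i‖ * ‖y i‖ := by
        gcongr; exact (S.le_of_opNorm_le hS _).trans_eq (one_mul _)
  exact (tsum_of_norm_bounded hxy.hasSum hbound).trans hCS

end Series

section Representation

variable {H : Type*} [NormedAddCommGroup H] [InnerProductSpace ℂ H]

@[simp]
lemma matOp_apply {m : ℕ} (T : Matrix (Fin m) (Fin m) (H →L[ℂ] H))
    (x : PiLp 2 fun _ : Fin m => H) (p : Fin m) :
    matOp T x p = ∑ q, T p q (x q) := by
  simp [matOp]

variable [CompleteSpace H]

lemma inner_sum_sum_mul_mul_apply {m : ℕ} (B C : Fin m → H →L[ℂ] H)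
    (T : Matrix (Fin m) (Fin m) (H →L[ℂ] H)) (x y : H) :
    ⟪(∑ p, ∑ q, B p * T p q * C q) x, y⟫_ℂ =
      ⟪matOp T (WithLp.toLp 2 fun q => C q x),
        WithLp.toLp 2 fun p => ContinuousLinearMap.adjoint (B p) y⟫_ℂ := by
  simp [PiLp.inner_apply, sum_inner, ContinuousLinearMap.adjoint_inner_right]

variable {A : Type*} [Semiring A] [Algebra ℂ A] [StarRing A] (π : A →⋆ₐ[ℂ] (H →L[ℂ] H))

lemma inner_map_sum_star_mul_self_apply {κ : Type*} [Fintype κ] (b : κ → A) (x : H) :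
    ⟪π (∑ q, star (b q) * b q) x, x⟫_ℂ =
      ((‖WithLp.toLp 2 fun q => π (b q) x‖ ^ 2 : ℝ) : ℂ) := by
  simp [PiLp.norm_sq_eq_of_L2, map_star, ContinuousLinearMap.star_eq_adjoint,
    ContinuousLinearMap.adjoint_inner_left, inner_self_eq_norm_sq_to_K]

lemma re_tsum_inner_map_sum_star_mul_self_apply {ι κ : Type*} [Fintype κ] (b : κ → A)
    (x : ι → H) :
    (∑' i, ⟪π (∑ q, star (b q) * b q) (x i), x i⟫_ℂ).re =
      ∑' i, ‖WithLp.toLp 2 fun q => π (b q) (x i)‖ ^ 2 := by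
  simp only [inner_map_sum_star_mul_self_apply, ← Complex.ofReal_tsum, Complex.ofReal_re]

end Representation

theorem abs_sum_le_sqrt_mul_sqrt_general
    {A : Type*} [CStarAlgebra A]
    {H : Type*} [NormedAddCommGroup H] [InnerProductSpace ℂ H] [CompleteSpace H]
    (π : A →⋆ₐ[ℂ] (H →L[ℂ] H))
    (ξ : ℕ → H) (hsum : Summable fun i => ‖ξ i‖ ^ 2)
    (ω : A → ℂ) (hω : ∀ c : A, ω c = ∑' i, ⟪(π c) (ξ i), ξ i⟫_ℂ)
    (m : ℕ) (T : Matrix (Fin m) (Fin m) (H →L[ℂ] H)) (hT : ‖matOp T‖ ≤ 1)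
    (a b : Fin m → A) :
    ‖∑' i, ⟪(∑ p, ∑ q, π (a p) * T p q * π (b q)) (ξ i), ξ i⟫_ℂ‖ ≤
      Real.sqrt (ω (∑ p, a p * star (a p))).re *
        Real.sqrt (ω (∑ q, star (b q) * b q)).re := by
  have hωa := re_tsum_inner_map_sum_star_mul_self_apply π (star a) ξ
  have hωb := re_tsum_inner_map_sum_star_mul_self_apply π b ξ
  simp only [Pi.star_apply, star_star, ← hω] at hωa hωb
  calc _ = ‖∑' i, ⟪matOp T (WithLp.toLp 2 fun q => π (b q) (ξ i)),
              WithLp.toLp 2 fun p => π (star (a p)) (ξ i)⟫_ℂ‖ := by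
        simp only [inner_sum_sum_mul_mul_apply, map_star, ContinuousLinearMap.star_eq_adjoint]
    _ ≤ _ := norm_tsum_inner_apply_le_of_norm_le_one hT
        (summable_norm_toLp_apply_sq _ hsum) (summable_norm_toLp_apply_sq _ hsum)
    _ = _ := by rw [hωa, hωb, mul_comm]

/-- The key inequality in the proof of Lemma 4.5: for a unital *-representation `π` of `𝒜`
on `H`, a sequence `(ξ_i)` with `Σ ‖ξ_i‖² = 1`, and `ω(c) = Σ_i ⟨π(c)ξ_i, ξ_i⟩`, one has
`|Σ_i ⟨(Σ_{p,q} π(a_p) T_{pq} π(b_q))ξ_i, ξ_i⟩| ≤ ω(Σ_p a_p a_p*)^{1/2} ω(Σ_q b_q* b_q)^{1/2}`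
whenever `‖T‖ ≤ 1` in `B(H^m)`. -/
theorem abs_sum_le_sqrt_mul_sqrt
    {A : Type*} [CStarAlgebra A]
    {H : Type*} [NormedAddCommGroup H] [InnerProductSpace ℂ H] [CompleteSpace H]
    (π : A →⋆ₐ[ℂ] (H →L[ℂ] H))
    (ξ : ℕ → H) (hsum : Summable fun i => ‖ξ i‖ ^ 2) (hnorm : (∑' i, ‖ξ i‖ ^ 2) = 1)
    (ω : A → ℂ) (hω : ∀ c : A, ω c = ∑' i, ⟪(π c) (ξ i), ξ i⟫_ℂ)
    (m : ℕ) (T : Matrix (Fin m) (Fin m) (H →L[ℂ] H)) (hT : ‖matOp T‖ ≤ 1)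
    (a b : Fin m → A) :
    ‖∑' i, ⟪(∑ p, ∑ q, π (a p) * T p q * π (b q)) (ξ i), ξ i⟫_ℂ‖ ≤
      Real.sqrt (ω (∑ p, a p * star (a p))).re *
        Real.sqrt (ω (∑ q, star (b q) * b q)).re :=
  abs_sum_le_sqrt_mul_sqrt_general π ξ hsum ω hω m T hT a b
end
end

section
/- Let 𝒜 be a unital C*-algebra and (V, V⁺, e) an AOU 𝒜-space. Assume V carries a topology making it a Hausdorff topological complex vector space such that the involution v ↦ v* is continuous, the cone V⁺ is closed, and for every a ∈ 𝒜 the maps x ↦ a·x and x ↦ x·a are continuous. Then for every n ∈ ℕ, the cone C_n^{min}(V;𝒜) is a closed subset of M_n(V) in the entrywise (product) topology. (This is the content of Theorem 5.5: for a dual AOU 𝒜-space, the minimal operator 𝒜-system structure is a dual operator 𝒜-system structure.) -/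
open Matrix

noncomputable section

theorem isClosed_setOf_isSelfAdjoint {R : Type*} [TopologicalSpace R] [T2Space R] [Star R]
    [ContinuousStar R] : IsClosed {x : R | IsSelfAdjoint x} :=
  isClosed_eq continuous_star continuous_id

namespace AOUPack

variable {A V : Type*} [Ring A] [StarRing A] [Algebra ℂ A]
  [AddCommGroup V] [Module ℂ V] [StarAddMonoid V] [StarModule ℂ V]

theorem Cmin_eq_setOf_isSelfAdjoint_inter (P : AOUPack A V) (n : ℕ) :
    P.Cmin n = {X | IsSelfAdjoint X} ∩
      ⋂ C : Matrix (Fin n) (Fin 1) A, (fun X => P.conj C X 0 0) ⁻¹' P.pos := by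
  ext X
  simp [Cmin, IsSelfAdjoint, star_eq_conjTranspose]

variable [TopologicalSpace V] [ContinuousAdd V] (P : AOUPack A V)

theorem continuous_amul (hl : ∀ a : A, Continuous fun x : V => P.l a x) {k m n : ℕ}
    (M : Matrix (Fin k) (Fin m) A) : Continuous (P.amul M : Matrix (Fin m) (Fin n) V → _) := by
  refine continuous_pi fun i => continuous_pi fun j => ?_
  simp only [amul, of_apply]
  exact continuous_finsetSum _ fun p _ => (hl _).comp (continuous_id.matrix_elem p j)

theorem continuous_vmul (hr : ∀ a : A, Continuous fun x : V => P.r x a) {m n l : ℕ}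
    (N : Matrix (Fin n) (Fin l) A) :
    Continuous (fun X : Matrix (Fin m) (Fin n) V => P.vmul X N) := by
  refine continuous_pi fun i => continuous_pi fun j => ?_
  simp only [vmul, of_apply]
  exact continuous_finsetSum _ fun p _ => (hr _).comp (continuous_id.matrix_elem i p)

theorem continuous_conj (hl : ∀ a : A, Continuous fun x : V => P.l a x)
    (hr : ∀ a : A, Continuous fun x : V => P.r x a) {m n : ℕ} (M : Matrix (Fin m) (Fin n) A) :
    Continuous (P.conj M) :=
  (P.continuous_vmul hr M).comp (P.continuous_amul hl Mᴴ)

end AOUPack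

theorem cmin_isClosed_general
    {A V : Type*} [CStarAlgebra A]
    [AddCommGroup V] [Module ℂ V] [StarAddMonoid V] [StarModule ℂ V]
    [TopologicalSpace V] [T2Space V] [IsTopologicalAddGroup V]
    [ContinuousStar V]
    (P : AOUPack A V)
    (hpos : IsClosed P.pos)
    (hl : ∀ a : A, Continuous fun x : V => P.l a x)
    (hr : ∀ a : A, Continuous fun x : V => P.r x a)
    (n : ℕ) :
    IsClosed (P.Cmin n) := by
  rw [P.Cmin_eq_setOf_isSelfAdjoint_inter]
  exact isClosed_setOf_isSelfAdjoint.inter <| isClosed_iInter fun C =>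
    hpos.preimage <| (P.continuous_conj hl hr C).matrix_elem 0 0

/-- Theorem 5.5 (content): on an AOU `𝒜`-space carrying a suitable linear topology
(Hausdorff, with continuous involution, closed cone and continuous module actions),
every cone `C_n^{min}(V;𝒜)` is closed in the entrywise topology on `M_n(V)`. -/
theorem cmin_isClosed
    {A V : Type*} [CStarAlgebra A]
    [AddCommGroup V] [Module ℂ V] [StarAddMonoid V] [StarModule ℂ V]
    [TopologicalSpace V] [T2Space V] [IsTopologicalAddGroup V] [ContinuousSMul ℂ V]
    [ContinuousStar V]
    (P : AOUPack A V)
    (hpos : IsClosed P.pos)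
    (hl : ∀ a : A, Continuous fun x : V => P.l a x)
    (hr : ∀ a : A, Continuous fun x : V => P.r x a)
    (n : ℕ) :
    IsClosed (P.Cmin n) :=
  cmin_isClosed_general P hpos hl hr n
end
end
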